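/- Let l ≥ 1, let e > 1 be odd, let m = 2^l·e ≥ 4, n = 2^m − 1, and a = 2^{(m+2^l)/2} + 1. Then for every integer k with 1 ≤ k ≤ 2^{(m−2^l)/2} or with 2^m − 2^{(m−2^l)/2} − 1 ≤ k ≤ 2^m − 1, the residue a·k mod n lies in T_{(0,m)}. -/

import Mathlib

open Polynomial

noncomputable def wt2 (a : ℕ) : ℕ := (Nat.digits 2 a).sum

noncomputable def ell (m i : ℕ) : ℕ :=
  sInf {l : ℕ | 0 < l ∧ i * 2 ^ l % (2 ^ m - 1) = i % (2 ^ m - 1)}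

noncomputable def coset (m i : ℕ) : Finset ℕ :=
  (Finset.range (ell m i)).image (fun j => i * 2 ^ j % (2 ^ m - 1))

noncomputable def rho (m i : ℕ) : ℕ := ((coset m i).filter (fun x => x % 2 = 0)).card

noncomputable def vv (m i : ℕ) : ℕ := m * rho m i / ell m i % 2

noncomputable def Tset (m j : ℕ) : Finset ℕ :=
  (Finset.range (2 ^ m - 1)).filter (fun i => vv m i = j)

noncomputable def Nset (m j : ℕ) : Finset ℕ :=
  (Finset.range (2 ^ m - 1)).filter (fun a => a ≠ 0 ∧ wt2 a % 2 = j)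

noncomputable def epsilon (h a : ℕ) : ℕ :=
  if a = 2 ^ h - 1 then 1 else sInf {t : ℕ | 2 ^ h - 1 ≤ 2 ^ t * a}

noncomputable def kappa (h a : ℕ) : ℕ := epsilon h a % 2

noncomputable def leader (m i : ℕ) : ℕ := sInf {x : ℕ | x ∈ coset m i}

noncomputable def uu (m h i : ℕ) : ℕ :=
  if leader m i = 1 then (vv m 1 + h + 1) % 2
  else if leader m i % 2 = 1 ∧ leader m i ≤ 2 ^ h - 1 then
    (kappa h (leader m i) + vv m (leader m i)) % 2
  else vv m (leader m i)

noncomputable def Dset (m h j : ℕ) : Finset ℕ :=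
  (Finset.range (2 ^ m - 1)).filter (fun i => uu m h i = j)

noncomputable def cyclicCode (m : ℕ) (α : GaloisField 2 m) (T : Set ℕ) :
    Submodule (ZMod 2) (Polynomial (ZMod 2)) :=
  Polynomial.degreeLT (ZMod 2) (2 ^ m - 1) ⊓
    ⨅ j ∈ T, LinearMap.ker (Polynomial.aeval (α ^ j)).toLinearMap

def minDistGE (C : Submodule (ZMod 2) (Polynomial (ZMod 2))) (d : ℕ) : Prop :=
  ∀ c ∈ C, c ≠ 0 → d ≤ c.support.card

/-!
Multiplying by `2` modulo `2 ^ m - 1` rotates `m`-bit words cyclically, so the parity of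
`y * 2 ^ j % (2 ^ m - 1)` is a bit of `y`, and the `m` rotations of `y` read each bit exactly
once. As `ℓ_y ∣ m`, the quantity `m ρ_y / ℓ_y` counts the even words among these `m` rotations, so
it equals `m - wt(y)`; for even `m`, `y ∈ T_(0,m)` iff `y` has even binary weight.

With `t = (m - 2 ^ l) / 2` and `s = t + 2 ^ l`, for `k ≤ 2 ^ t` the product `(2 ^ s + 1) k` is `k`
written twice without overlap (or `2 ^ t + 1` modulo `2 ^ m - 1` when `k = 2 ^ t`), so its weight is
even. The upper range of `k` is the negative of the lower one, and negation modulo `2 ^ m - 1` is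
bitwise complement, which changes the weight `w` into `m - w`.
-/

open Finset Function

theorem Nat.count_mul_of_periodic {p : ℕ → Prop} [DecidablePred p] {a : ℕ}
    (hp : Periodic p a) (c : ℕ) : Nat.count p (c * a) = c * Nat.count p a := by
  induction c with
  | zero => simp
  | succ c ih =>
    have hshift : (fun k => p (c * a + k)) = p :=
      funext fun k => by simpa [add_comm] using hp.nat_mul c k
    rw [add_mul, one_mul, Nat.count_add, ih]
    simp only [hshift, add_mul, one_mul]

theorem wt2_eq_mod_two_add (x : ℕ) : wt2 x = x % 2 + wt2 (x / 2) := by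
  rcases Nat.eq_zero_or_pos x with rfl | hx
  · simp [wt2]
  · rw [wt2, wt2, Nat.digits_def' one_lt_two hx, List.sum_cons]

theorem wt2_two_mul_add (a : ℕ) {b : ℕ} (hb : b < 2) : wt2 (2 * a + b) = b + wt2 a := by
  rw [wt2_eq_mod_two_add, show (2 * a + b) % 2 = b by omega, show (2 * a + b) / 2 = a by omega]

theorem wt2_two_pow_mul_add (s q : ℕ) {r : ℕ} (hr : r < 2 ^ s) :
    wt2 (2 ^ s * q + r) = wt2 q + wt2 r := by
  induction s generalizing r with
  | zero =>
    obtain rfl : r = 0 := by simpa using hr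
    simp [wt2]
  | succ s ih =>
    rw [pow_succ'] at hr
    have hsplit : 2 ^ (s + 1) * q + r = 2 * (2 ^ s * q + r / 2) + r % 2 := by
      rw [pow_succ', mul_assoc]; omega
    rw [hsplit, wt2_two_mul_add _ (Nat.mod_lt _ two_pos), ih (by omega), wt2_eq_mod_two_add r]
    ring

theorem wt2_two_pow (t : ℕ) : wt2 (2 ^ t) = 1 := by
  simpa [wt2] using wt2_two_pow_mul_add t 1 (Nat.two_pow_pos t)

theorem wt2_two_pow_sub_one_sub_add {m x : ℕ} (hx : x ≤ 2 ^ m - 1) :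
    wt2 (2 ^ m - 1 - x) + wt2 x = m := by
  induction m generalizing x with
  | zero =>
    obtain rfl : x = 0 := by simpa using hx
    simp [wt2]
  | succ m ih =>
    rw [pow_succ'] at hx ⊢
    have := Nat.two_pow_pos m
    have hhalf := ih (x := x / 2) (by omega)
    rw [show 2 * 2 ^ m - 1 - x = 2 * (2 ^ m - 1 - x / 2) + (1 - x % 2) by omega,
      wt2_two_mul_add _ (by omega), wt2_eq_mod_two_add x]
    omega

theorem wt2_eq_sum_range {m x : ℕ} (hx : x < 2 ^ m) :
    wt2 x = ∑ i ∈ range m, x / 2 ^ i % 2 := by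
  induction m generalizing x with
  | zero =>
    obtain rfl : x = 0 := by simpa using hx
    simp [wt2]
  | succ m ih =>
    rw [sum_range_succ', wt2_eq_mod_two_add, ih (by rw [pow_succ] at hx; omega), add_comm]
    simp [pow_succ', Nat.div_div_eq_div_mul]

section Rotation

theorem mul_two_pow_modEq_self (y m : ℕ) : y * 2 ^ m ≡ y [MOD 2 ^ m - 1] := by
  simpa using (Nat.modEq_sub Nat.one_le_two_pow).mul_left y

variable {m y : ℕ}

theorem mul_two_pow_mod_two_pow_sub_one (hy : y < 2 ^ m - 1) {j : ℕ} (hj : j ≤ m) :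
    y * 2 ^ j % (2 ^ m - 1) = y % 2 ^ (m - j) * 2 ^ j + y / 2 ^ (m - j) := by
  set A := 2 ^ j
  set B := 2 ^ (m - j)
  have hAB : A * B = 2 ^ m := by rw [← pow_add]; congr 1; omega
  have hA : 0 < A := Nat.two_pow_pos j
  have hB : 0 < B := Nat.two_pow_pos (m - j)
  set q := y / B
  set r := y % B
  have hy' : y = B * q + r := (Nat.div_add_mod y B).symm
  have hr : r < B := Nat.mod_lt y hB
  -- `y` is the concatenation of the words `q` and `r`, and multiplying by `2 ^ j` swaps them
  have hcong : y * A ≡ r * A + q [MOD 2 ^ m - 1] := by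
    calc y * A = r * A + q * 2 ^ m := by rw [hy', ← hAB]; ring
      _ ≡ r * A + q [MOD 2 ^ m - 1] := (mul_two_pow_modEq_self q m).add_left (r * A)
  have hlt : r * A + q < 2 ^ m - 1 := by
    rw [← hAB] at hy ⊢
    have hq : q < A := Nat.div_lt_of_lt_mul (by rw [mul_comm]; omega)
    rcases Nat.lt_or_ge (r + 1) B with h | h
    · have : r * A + 2 * A ≤ A * B := by nlinarith
      omega
    · have hB' : A * B = r * A + A := by rw [show B = r + 1 by omega]; ring
      have : B * (q + 1) < B * A := by rw [mul_comm B A, mul_add, mul_one]; omega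
      have := Nat.lt_of_mul_lt_mul_left this
      omega
  rw [hcong, Nat.mod_eq_of_lt hlt]

theorem mul_two_pow_mod_two_pow_sub_one_mod_two (hy : y < 2 ^ m - 1) {j : ℕ} (hj0 : 0 < j)
    (hj : j ≤ m) : y * 2 ^ j % (2 ^ m - 1) % 2 = y / 2 ^ (m - j) % 2 := by
  obtain ⟨i, rfl⟩ : ∃ i, j = i + 1 := ⟨j - 1, by omega⟩
  rw [mul_two_pow_mod_two_pow_sub_one hy hj, pow_succ, ← mul_assoc]
  omega

theorem sum_mul_two_pow_mod_mod_two (hy : y < 2 ^ m - 1) :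
    ∑ j ∈ range m, y * 2 ^ j % (2 ^ m - 1) % 2 = wt2 y := by
  set g := fun j => y * 2 ^ j % (2 ^ m - 1) % 2
  have hg : g m = g 0 := by
    simp only [g, pow_zero, mul_one]
    exact congrArg (· % 2) (mul_two_pow_modEq_self y m)
  have hshift : ∑ j ∈ range m, g j = ∑ j ∈ range m, g (j + 1) := by
    have := (sum_range_succ g m).symm.trans (sum_range_succ' g m)
    rw [hg] at this
    omega
  rw [hshift, wt2_eq_sum_range (x := y) (m := m) (by omega), ← sum_range_reflect]
  refine sum_congr rfl fun j hj => ?_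
  rw [mem_range] at hj
  simp only [g]
  rw [mul_two_pow_mod_two_pow_sub_one_mod_two hy (by omega) (by omega)]
  congr 3
  omega

theorem card_filter_even_add_wt2 (hy : y < 2 ^ m - 1) :
    #{j ∈ range m | y * 2 ^ j % (2 ^ m - 1) % 2 = 0} + wt2 y = m := by
  rw [← sum_mul_two_pow_mod_mod_two hy, card_filter, ← sum_add_distrib]
  have hone : ∀ j ∈ range m,
      (if y * 2 ^ j % (2 ^ m - 1) % 2 = 0 then 1 else 0) + y * 2 ^ j % (2 ^ m - 1) % 2 = 1 := by
    intro j _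
    rcases Nat.mod_two_eq_zero_or_one (y * 2 ^ j % (2 ^ m - 1)) with h | h <;> simp [h]
  rw [sum_congr rfl hone, sum_const, card_range, smul_eq_mul, mul_one]

end Rotation

section Orbit

-- the cyclic left shift of `m`-bit words
def cyclicShift (m x : ℕ) : ℕ := x * 2 % (2 ^ m - 1)

variable {m y : ℕ}

theorem iterate_cyclicShift (hy : y < 2 ^ m - 1) (j : ℕ) :
    (cyclicShift m)^[j] y = y * 2 ^ j % (2 ^ m - 1) := by
  induction j with
  | zero => simp [Nat.mod_eq_of_lt hy]
  | succ j ih =>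
    rw [iterate_succ_apply', ih, cyclicShift, Nat.mod_mul_mod, pow_succ, mul_assoc]

theorem isPeriodicPt_cyclicShift_iff (hy : y < 2 ^ m - 1) (l : ℕ) :
    IsPeriodicPt (cyclicShift m) l y ↔ y * 2 ^ l % (2 ^ m - 1) = y % (2 ^ m - 1) := by
  rw [IsPeriodicPt, IsFixedPt, iterate_cyclicShift hy, Nat.mod_eq_of_lt hy]

theorem isPeriodicPt_cyclicShift (hy : y < 2 ^ m - 1) : IsPeriodicPt (cyclicShift m) m y :=
  (isPeriodicPt_cyclicShift_iff hy m).2 (mul_two_pow_modEq_self y m)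

theorem ell_eq_minimalPeriod (hy : y < 2 ^ m - 1) : ell m y = minimalPeriod (cyclicShift m) y := by
  have hm : 0 < m := Nat.pos_of_ne_zero fun h => by simp [h] at hy
  have hmem : ell m y ∈ {l | 0 < l ∧ y * 2 ^ l % (2 ^ m - 1) = y % (2 ^ m - 1)} :=
    Nat.sInf_mem ⟨m, hm, mul_two_pow_modEq_self y m⟩
  refine le_antisymm (Nat.sInf_le ⟨?_, ?_⟩) ?_
  · exact (isPeriodicPt_cyclicShift hy).minimalPeriod_pos hm
  · exact (isPeriodicPt_cyclicShift_iff hy _).1 (isPeriodicPt_minimalPeriod _ y)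
  · exact IsPeriodicPt.minimalPeriod_le hmem.1 ((isPeriodicPt_cyclicShift_iff hy _).2 hmem.2)

theorem rho_eq_count (hy : y < 2 ^ m - 1) :
    rho m y = Nat.count (fun j => (cyclicShift m)^[j] y % 2 = 0)
      (minimalPeriod (cyclicShift m) y) := by
  have hcoset : coset m y =
      (range (minimalPeriod (cyclicShift m) y)).image ((cyclicShift m)^[·] y) := by
    simp only [coset, ell_eq_minimalPeriod hy, iterate_cyclicShift hy]
  rw [rho, hcoset, filter_image, Nat.count_eq_card_filter_range, card_image_of_injOn]
  refine iterate_injOn_Iio_minimalPeriod.mono fun j hj => ?_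
  simp only [coe_filter, mem_range] at hj
  exact hj.1

theorem mul_rho_div_ell (hy : y < 2 ^ m - 1) : m * rho m y / ell m y = m - wt2 y := by
  set p := minimalPeriod (cyclicShift m) y
  set P := fun j => (cyclicShift m)^[j] y % 2 = 0
  have hdvd : p ∣ m := (isPeriodicPt_cyclicShift hy).minimalPeriod_dvd
  have hP : Periodic P p := fun j => by simp only [P, p, iterate_add_minimalPeriod_eq]
  have hcount : Nat.count P m = m - wt2 y := by
    have := card_filter_even_add_wt2 hy
    simp only [Nat.count_eq_card_filter_range, P, iterate_cyclicShift hy]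
    omega
  rw [rho_eq_count hy, ell_eq_minimalPeriod hy, Nat.mul_div_right_comm hdvd,
    ← Nat.count_mul_of_periodic hP, Nat.div_mul_cancel hdvd, hcount]

theorem mem_Tset_zero_of_even_wt2 (hm : Even m) (hy : y < 2 ^ m - 1) (hw : Even (wt2 y)) :
    y ∈ Tset m 0 := by
  have hle : wt2 y ≤ m := by have := card_filter_even_add_wt2 hy; omega
  rw [Tset, mem_filter, mem_range, vv, mul_rho_div_ell hy, ← Nat.even_iff, Nat.even_sub hle]
  exact ⟨hy, iff_of_true hm hw⟩

end Orbit

theorem wt2_two_pow_add_one_mul_mod {s t m k : ℕ} (hst : s + t = m) (hts : t < s) (ht : 0 < t)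
    (hk : k ≤ 2 ^ t) : wt2 ((2 ^ s + 1) * k % (2 ^ m - 1)) = 2 * wt2 k := by
  have hpow : 2 ^ s * 2 ^ t = 2 ^ m := by rw [← pow_add, hst]
  have hts' : 2 ^ t < 2 ^ s := Nat.pow_lt_pow_right one_lt_two hts
  have ht' : 1 < 2 ^ t := Nat.one_lt_two_pow ht.ne'
  rcases hk.lt_or_eq with hk | rfl
  · -- the words `2 ^ s * k` and `k` do not overlap
    have hbound : 2 ^ s * (k + 1) ≤ 2 ^ m := hpow ▸ Nat.mul_le_mul_left _ hk
    have hlt : (2 ^ s + 1) * k < 2 ^ m - 1 := by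
      rw [add_one_mul]
      rw [mul_add_one] at hbound
      omega
    rw [Nat.mod_eq_of_lt hlt, add_one_mul, wt2_two_pow_mul_add s k (hk.trans hts'), two_mul]
  · have hcong : (2 ^ s + 1) * 2 ^ t ≡ 2 ^ t * 1 + 1 [MOD 2 ^ m - 1] := by
      calc (2 ^ s + 1) * 2 ^ t = 2 ^ t + 1 * 2 ^ m := by rw [← hpow]; ring
        _ ≡ 2 ^ t + 1 * 1 [MOD 2 ^ m - 1] := (mul_two_pow_modEq_self 1 m).add_left _
        _ = 2 ^ t * 1 + 1 := by ring
    have hlt : 2 ^ t * 1 + 1 < 2 ^ m - 1 := by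
      have h4 : 2 ^ 2 ≤ 2 ^ s := Nat.pow_le_pow_right two_pos (by omega)
      have := Nat.mul_le_mul_right (2 ^ t) h4
      omega
    rw [hcong, Nat.mod_eq_of_lt hlt, wt2_two_pow_mul_add t 1 ht', wt2_two_pow]
    norm_num [wt2]

theorem even_wt2_mod_of_dvd_add {m x x' : ℕ} (hm : Even m) (hdvd : 2 ^ m - 1 ∣ x + x')
    (hx' : Even (wt2 (x' % (2 ^ m - 1)))) : Even (wt2 (x % (2 ^ m - 1))) := by
  set n := 2 ^ m - 1
  rcases Nat.eq_zero_or_pos n with hn | hn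
  · rw [hn, zero_dvd_iff] at hdvd
    rw [show x = 0 by omega, Nat.zero_mod]
    exact ⟨0, rfl⟩
  have hsum : n ∣ x % n + x' % n := by
    rwa [Nat.dvd_iff_mod_eq_zero, ← Nat.add_mod, ← Nat.dvd_iff_mod_eq_zero]
  obtain ⟨c, hc⟩ := hsum
  have hc2 : c < 2 := by
    by_contra!
    nlinarith [Nat.mod_lt x hn, Nat.mod_lt x' hn, Nat.mul_le_mul_left n this]
  interval_cases c
  · rw [show x % n = 0 by omega]
    exact ⟨0, rfl⟩
  · -- `x % n` is the bitwise complement of `x' % n`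
    have hcompl := wt2_two_pow_sub_one_sub_add (m := m) (Nat.mod_lt x' hn).le
    rw [show n - x' % n = x % n by omega] at hcompl
    rw [← hcompl, Nat.even_add] at hm
    exact hm.2 hx'

theorem stmt8_general (l e m : ℕ) (hl : 1 ≤ l) (he : Odd e) (he1 : 1 < e)
    (hm : m = 2 ^ l * e) (k : ℕ)
    (hk : (1 ≤ k ∧ k ≤ 2 ^ ((m - 2 ^ l) / 2)) ∨
      (2 ^ m - 2 ^ ((m - 2 ^ l) / 2) - 1 ≤ k ∧ k ≤ 2 ^ m - 1)) :
    (2 ^ ((m + 2 ^ l) / 2) + 1) * k % (2 ^ m - 1) ∈ Tset m 0 := by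
  obtain ⟨e', rfl⟩ := he
  have hl2 : 2 ≤ 2 ^ l := Nat.le_self_pow (by omega) 2
  set t := 2 ^ l * e'
  have hmt : m = 2 * t + 2 ^ l := by rw [hm]; ring
  rw [show (m + 2 ^ l) / 2 = t + 2 ^ l by omega]
  rw [show (m - 2 ^ l) / 2 = t by omega] at hk
  have hst : t + 2 ^ l + t = m := by omega
  have ht : 0 < t := Nat.mul_pos (Nat.two_pow_pos l) (by omega)
  have hme : Even m := hm ▸ (Nat.even_pow.2 ⟨even_two, by omega⟩).mul_right _
  have hsmall : ∀ k ≤ 2 ^ t, Even (wt2 ((2 ^ (t + 2 ^ l) + 1) * k % (2 ^ m - 1))) := by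
    intro k hk
    rw [wt2_two_pow_add_one_mul_mod hst (by omega) ht hk]
    exact even_two_mul _
  have ht2 := Nat.two_pow_pos t
  have hn : 1 < 2 ^ m := Nat.one_lt_two_pow (by omega)
  refine mem_Tset_zero_of_even_wt2 hme (Nat.mod_lt _ (by omega)) ?_
  rcases hk with ⟨-, hk⟩ | ⟨hk₁, hk₂⟩
  · exact hsmall k hk
  · refine even_wt2_mod_of_dvd_add hme ?_ (hsmall (2 ^ m - 1 - k) (by omega))
    rw [← mul_add, Nat.add_sub_cancel' hk₂]
    exact dvd_mul_left _ _

theorem stmt8 (l e m : ℕ) (hl : 1 ≤ l) (he : Odd e) (he1 : 1 < e)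
    (hm : m = 2 ^ l * e) (hm4 : 4 ≤ m) (k : ℕ)
    (hk : (1 ≤ k ∧ k ≤ 2 ^ ((m - 2 ^ l) / 2)) ∨
      (2 ^ m - 2 ^ ((m - 2 ^ l) / 2) - 1 ≤ k ∧ k ≤ 2 ^ m - 1)) :
    (2 ^ ((m + 2 ^ l) / 2) + 1) * k % (2 ^ m - 1) ∈ Tset m 0 :=
  stmt8_general l e m hl he he1 hm k hk
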